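/- Let C : Σ → {0,1}^n be a code with pairwise relative Hamming distance at least δ between distinct codewords. Let Y be a distribution over Σ that is ε-far in total variation distance from every distribution over Σ with support size at most m. Then the pushforward distribution C(Y) over {0,1}^n is at Hamming earth mover's distance at least 0.3·δ·ε from every distribution over {0,1}^n with support size at most m. -/

import Mathlib

open Finset
open scoped Classical

noncomputable section

/-- A probability distribution on a finite type, given as a mass function. -/
def IsDist {α : Type*} [Fintype α] (P : α → ℝ) : Prop :=
  (∀ x, 0 ≤ P x) ∧ ∑ x, P x = 1

/-- A coupling of two mass functions. -/
def IsCoupling {α : Type*} [Fintype α] (P Q : α → ℝ) (W : α → α → ℝ) : Prop :=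
  (∀ x y, 0 ≤ W x y) ∧ (∀ x, ∑ y, W x y = P x) ∧ (∀ y, ∑ x, W x y = Q y)

/-- Earth mover's distance with respect to a cost function `d`. -/
def emd {α : Type*} [Fintype α] (d : α → α → ℝ) (P Q : α → ℝ) : ℝ :=
  sInf {c : ℝ | ∃ W, IsCoupling P Q W ∧ c = ∑ x, ∑ y, W x y * d x y}

/-- Total variation distance. -/
def tv {α : Type*} [Fintype α] (P Q : α → ℝ) : ℝ :=
  (∑ x, |P x - Q x|) / 2

/-- Relative Hamming distance on `n`-bit strings. -/
def relHamming {n : ℕ} (x y : Fin n → Bool) : ℝ :=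
  (hammingDist x y : ℝ) / n

/-- Support size of a mass function. -/
def suppCard {α : Type*} [Fintype α] (P : α → ℝ) : ℕ :=
  (univ.filter fun x => P x ≠ 0).card

/-- Pushforward of a mass function along a map. -/
def push {α β : Type*} [Fintype α] (f : α → β) (P : α → ℝ) : β → ℝ :=
  fun y => ∑ x ∈ univ.filter (fun x => f x = y), P x

/-! Decode every word to a nearest codeword `ρ`; since codewords are `δ`-separated,
`ρ ∘ C = id`, so pushing `C(Y)` and `Z` forward along `ρ` gives `Y` and a distribution `ρ(Z)`
of support at most `m`. For any coupling `W` of `C(Y)` and `Z`, `tv Y ρ(Z)` is at most the mass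
that `W` moves between different fibres of `ρ`, and by the triangle inequality every such unit
of mass leaving a codeword travels at least `δ / 2`. Hence the cost of `W` is at least
`δ / 2 · tv Y ρ(Z) ≥ δ ε / 2`. -/

lemma IsDist.nonempty {α : Type*} [Fintype α] {P : α → ℝ} (hP : IsDist P) : Nonempty α := by
  by_contra h
  rw [not_nonempty_iff] at h
  simpa using hP.2

lemma tv_nonneg {α : Type*} [Fintype α] (P Q : α → ℝ) : 0 ≤ tv P Q :=
  div_nonneg (sum_nonneg fun _ _ => abs_nonneg _) zero_le_two

section Push

variable {α β γ : Type*} [Fintype α]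

lemma push_apply_eq_sum_ite (f : α → β) (P : α → ℝ) (b : β) :
    push f P b = ∑ x, if f x = b then P x else 0 :=
  sum_filter _ _

lemma push_isDist [Fintype β] (f : α → β) {P : α → ℝ} (hP : IsDist P) :
    IsDist (push f P) := by
  refine ⟨fun b => sum_nonneg fun x _ => hP.1 x, ?_⟩
  simp only [push_apply_eq_sum_ite]
  rw [sum_comm]
  simpa using hP.2

lemma exists_eq_of_push_ne_zero {f : α → β} {P : α → ℝ} {b : β} (h : push f P b ≠ 0) :
    ∃ a, f a = b := by
  obtain ⟨a, ha, -⟩ := exists_ne_zero_of_sum_ne_zero h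
  exact ⟨a, (mem_filter.mp ha).2⟩

lemma suppCard_push_le [Fintype β] (f : α → β) (P : α → ℝ) :
    suppCard (push f P) ≤ suppCard P := by
  refine (card_le_card fun b hb => ?_).trans (card_image_le (f := f))
  obtain ⟨a, ha, hPa⟩ := exists_ne_zero_of_sum_ne_zero (mem_filter.mp hb).2
  exact mem_image.mpr ⟨a, by simpa using hPa, (mem_filter.mp ha).2⟩

lemma push_push [Fintype β] (f : α → β) (g : β → γ) (P : α → ℝ) :
    push g (push f P) = push (g ∘ f) P := by
  funext c
  simp only [push_apply_eq_sum_ite, Function.comp_apply, ite_sum_zero]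
  rw [sum_comm]
  refine sum_congr rfl fun a _ => ?_
  rw [sum_eq_single (f a)] <;> aesop

lemma push_id (P : α → ℝ) : push id P = P := by
  funext a
  simp [push_apply_eq_sum_ite]

end Push

section Coupling

variable {α β : Type*} [Fintype α] {P Q : α → ℝ} {W : α → α → ℝ}

lemma IsCoupling.eq_zero_of_left_eq_zero (hW : IsCoupling P Q W) {x : α} (hx : P x = 0)
    (y : α) : W x y = 0 :=
  (sum_eq_zero_iff_of_nonneg fun y _ => hW.1 x y).mp (by rw [hW.2.1 x, hx]) y (mem_univ y)

lemma isCoupling_mul {P Q : α → ℝ} (hP : IsDist P) (hQ : IsDist Q) :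
    IsCoupling P Q fun x y => P x * Q y :=
  ⟨fun x y => mul_nonneg (hP.1 x) (hQ.1 y), fun x => by rw [← mul_sum, hQ.2, mul_one],
    fun y => by rw [← sum_mul, hP.2, one_mul]⟩

lemma le_emd_of_forall_isCoupling {d : α → α → ℝ} {c : ℝ} (hP : IsDist P) (hQ : IsDist Q)
    (h : ∀ W, IsCoupling P Q W → c ≤ ∑ x, ∑ y, W x y * d x y) : c ≤ emd d P Q := by
  refine le_csInf ⟨_, _, isCoupling_mul hP hQ, rfl⟩ ?_
  rintro _ ⟨W, hW, rfl⟩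
  exact h W hW

def movedMass (f : α → β) (W : α → α → ℝ) : ℝ :=
  ∑ x, ∑ y, if f x = f y then 0 else W x y

lemma sum_abs_ite_sub_ite [Fintype β] (u v : β) :
    ∑ b, |(if u = b then (1 : ℝ) else 0) - if v = b then 1 else 0| =
      if u = v then 0 else 2 := by
  split_ifs with huv
  · simp [huv]
  · have h : ∀ b, |(if u = b then (1 : ℝ) else 0) - if v = b then 1 else 0| =
        (if u = b then 1 else 0) + if v = b then 1 else 0 := by
      intro b
      by_cases hu : u = b <;> by_cases hv : v = b <;> simp_all
    simp only [h, sum_add_distrib, sum_ite_eq, mem_univ, if_true]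
    norm_num

lemma tv_push_le_movedMass [Fintype β] (f : α → β) (hW : IsCoupling P Q W) :
    tv (push f P) (push f Q) ≤ movedMass f W := by
  set ind : α → β → ℝ := fun x b => if f x = b then 1 else 0
  have hdiff : ∀ b, push f P b - push f Q b = ∑ x, ∑ y, (ind x b - ind y b) * W x y := by
    intro b
    simp only [push_apply_eq_sum_ite, ← hW.2.1, ← hW.2.2, sub_mul, sum_sub_distrib, ind]
    rw [sum_comm (f := fun x y => (if f y = b then 1 else 0) * W x y)]
    simp [ite_mul]
  have hpoint : ∀ b, |push f P b - push f Q b| ≤ ∑ x, ∑ y, |ind x b - ind y b| * W x y := by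
    intro b
    rw [hdiff b]
    refine (abs_sum_le_sum_abs _ _).trans (sum_le_sum fun x _ => ?_)
    refine (abs_sum_le_sum_abs _ _).trans (le_of_eq (sum_congr rfl fun y _ => ?_))
    rw [abs_mul, abs_of_nonneg (hW.1 x y)]
  have hmoved : ∑ b, ∑ x, ∑ y, |ind x b - ind y b| * W x y =
      2 * movedMass f W := by
    rw [sum_comm, movedMass, mul_sum]
    refine sum_congr rfl fun x _ => ?_
    rw [sum_comm, mul_sum]
    refine sum_congr rfl fun y _ => ?_
    rw [← sum_mul, sum_abs_ite_sub_ite]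
    split_ifs <;> ring
  unfold tv
  linarith [sum_le_sum fun b (_ : b ∈ univ) => hpoint b]

lemma mul_movedMass_le_cost (f : α → β) {d : α → α → ℝ} {r : ℝ}
    (hW : IsCoupling P Q W) (hd : ∀ x y, 0 ≤ d x y)
    (hr : ∀ x y, P x ≠ 0 → f x ≠ f y → r ≤ d x y) :
    r * movedMass f W ≤ ∑ x, ∑ y, W x y * d x y := by
  rw [movedMass, mul_sum]
  refine sum_le_sum fun x _ => ?_
  rw [mul_sum]
  refine sum_le_sum fun y _ => ?_
  split_ifs with hf
  · simpa using mul_nonneg (hW.1 x y) (hd x y)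
  · by_cases hPx : P x = 0
    · simp [hW.eq_zero_of_left_eq_zero hPx y]
    · rw [mul_comm]
      exact mul_le_mul_of_nonneg_left (hr x y hPx hf) (hW.1 x y)

end Coupling

section Decoding

variable {n : ℕ}

lemma relHamming_nonneg (x y : Fin n → Bool) : 0 ≤ relHamming x y :=
  div_nonneg (Nat.cast_nonneg _) (Nat.cast_nonneg _)

lemma relHamming_comm (x y : Fin n → Bool) : relHamming x y = relHamming y x := by
  simp [relHamming, hammingDist_comm]

lemma relHamming_self (x : Fin n → Bool) : relHamming x x = 0 := by
  simp [relHamming]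

lemma relHamming_triangle (x y z : Fin n → Bool) :
    relHamming x z ≤ relHamming x y + relHamming y z := by
  rw [relHamming, relHamming, relHamming, ← add_div]
  gcongr
  exact_mod_cast hammingDist_triangle x y z

variable {S : Type*} [Fintype S] [Nonempty S]

def nearestCodeword (C : S → Fin n → Bool) (z : Fin n → Bool) : S :=
  (univ.exists_min_image (fun a => relHamming (C a) z) univ_nonempty).choose

lemma relHamming_nearestCodeword_le (C : S → Fin n → Bool) (z : Fin n → Bool) (a : S) :
    relHamming (C (nearestCodeword C z)) z ≤ relHamming (C a) z :=
  (univ.exists_min_image (fun a => relHamming (C a) z) univ_nonempty).choose_spec.2 a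
    (mem_univ a)

variable {δ : ℝ} {C : S → Fin n → Bool}

lemma nearestCodeword_apply (hδ : 0 < δ)
    (hC : ∀ a b : S, a ≠ b → δ ≤ relHamming (C a) (C b)) (a : S) :
    nearestCodeword C (C a) = a := by
  by_contra hne
  have := relHamming_nearestCodeword_le C (C a) a
  rw [relHamming_self] at this
  linarith [hC _ _ hne]

lemma half_le_relHamming_of_nearestCodeword_ne
    (hC : ∀ a b : S, a ≠ b → δ ≤ relHamming (C a) (C b)) {a : S} {z : Fin n → Bool}
    (hz : nearestCodeword C z ≠ a) : δ / 2 ≤ relHamming (C a) z := by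
  have hnear := relHamming_nearestCodeword_le C z a
  have htri := relHamming_triangle (C a) z (C (nearestCodeword C z))
  rw [relHamming_comm z] at htri
  linarith [hC _ _ (Ne.symm hz)]

end Decoding

theorem code_pushforward_far_general {n m : ℕ} {S : Type*} [Fintype S]
    (δ ε : ℝ) (hδ : 0 < δ)
    (C : S → (Fin n → Bool))
    (hC : ∀ a b : S, a ≠ b → δ ≤ relHamming (C a) (C b))
    (Y : S → ℝ) (hY : IsDist Y)
    (hYfar : ∀ Q : S → ℝ, IsDist Q → suppCard Q ≤ m → ε < tv Y Q) :
    ∀ Z : (Fin n → Bool) → ℝ, IsDist Z → suppCard Z ≤ m →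
      0.3 * δ * ε ≤ emd relHamming (push C Y) Z := by
  intro Z hZ hZm
  have := hY.nonempty
  set ρ := nearestCodeword C
  have hρC : ∀ a, ρ (C a) = a := nearestCodeword_apply hδ hC
  have hdecode : push ρ (push C Y) = Y := by
    rw [push_push, show ρ ∘ C = id from funext hρC, push_id]
  have hfar : ε < tv Y (push ρ Z) :=
    hYfar _ (push_isDist ρ hZ) ((suppCard_push_le ρ Z).trans hZm)
  refine le_emd_of_forall_isCoupling (push_isDist C hY) hZ fun W hW => ?_
  have htv : tv Y (push ρ Z) ≤ movedMass ρ W := hdecode ▸ tv_push_le_movedMass ρ hW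
  have hcost : δ / 2 * movedMass ρ W ≤ ∑ x, ∑ y, W x y * relHamming x y := by
    refine mul_movedMass_le_cost ρ hW relHamming_nonneg fun _ y hx hxy => ?_
    obtain ⟨a, rfl⟩ := exists_eq_of_push_ne_zero hx
    rw [hρC] at hxy
    exact half_le_relHamming_of_nearestCodeword_ne hC (Ne.symm hxy)
  nlinarith [tv_nonneg Y (push ρ Z)]

/-- pushing a TV-far-from-small-support distribution through a code of relative
distance `δ` yields a distribution at Hamming EMD at least `0.3·δ·ε` from every distribution
with support size at most `m`. -/
theorem code_pushforward_far {n m : ℕ} {S : Type*} [Fintype S] (hn : 0 < n)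
    (δ ε : ℝ) (hδ : 0 < δ)
    (C : S → (Fin n → Bool))
    (hC : ∀ a b : S, a ≠ b → δ ≤ relHamming (C a) (C b))
    (Y : S → ℝ) (hY : IsDist Y)
    (hYfar : ∀ Q : S → ℝ, IsDist Q → suppCard Q ≤ m → ε < tv Y Q) :
    ∀ Z : (Fin n → Bool) → ℝ, IsDist Z → suppCard Z ≤ m →
      0.3 * δ * ε ≤ emd relHamming (push C Y) Z :=
  code_pushforward_far_general δ ε hδ C hC Y hY hYfar
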